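/- arXiv:2301.03438 — 6 statements merged into one kernel-verified Lean document; each statement's English description precedes it below -/
import Mathlib

section
/- Let d ≥ 1, U ≥ 0, and tₙ₋₁ < tₙ with Δt := tₙ − tₙ₋₁. Let u : ℝ^d × ℝ → ℝ^d be measurable with |u(x,t)| ≤ U for all (x,t). Let f : ℝ^d → ℝ be continuously differentiable with compact support. Let X : ℝ^d × [tₙ₋₁, tₙ] → ℝ^d be measurable such that: (i) X(x,tₙ) = x for all x; (ii) for each x the map τ ↦ X(x,τ) is differentiable with ∂X/∂τ(x,τ) = u(X(x,τ),τ); and (iii) for each τ ∈ [tₙ₋₁,tₙ] the map x ↦ X(x,τ) preserves Lebesgue measure on ℝ^d. Then (∫_{ℝ^d} |f(X(x,tₙ₋₁)) − f(x)|² dx)^{1/2} ≤ Δt · U · (∫_{ℝ^d} |∇f(x)|² dx)^{1/2}. -/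
/-!
Along a characteristic `τ ↦ X(x,τ)` the chain rule and the speed bound give
`|f(X(x,t₀)) - f(x)| ≤ U ∫_{t₀}^{t₁} |∇f(X(x,τ))| dτ`, and Cauchy–Schwarz in `τ` turns this into
`|f(X(x,t₀)) - f(x)|² ≤ (t₁ - t₀) U² ∫_{t₀}^{t₁} |∇f(X(x,τ))|² dτ`. Integrating in `x`, Tonelli and
the measure preservation of each `X(·,τ)` replace the inner integral by `‖∇f‖²_{L²}`.
Working with `ℝ≥0∞`-valued integrals lets Tonelli apply without integrability side conditions.
-/

open MeasureTheory Set
open scoped ENNReal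

theorem abs_comp_sub_le_mul_integral_norm_fderiv {E : Type*} [NormedAddCommGroup E]
    [NormedSpace ℝ E] {f : E → ℝ} (hf : ContDiff ℝ 1 f) {γ v : ℝ → E} {a b U : ℝ}
    (hab : a ≤ b) (hγ : ∀ τ ∈ Icc a b, HasDerivAt γ (v τ) τ) (hv : ∀ τ ∈ Icc a b, ‖v τ‖ ≤ U) :
    |f (γ b) - f (γ a)| ≤ U * ∫ τ in a..b, ‖fderiv ℝ f (γ τ)‖ := by
  have hfγ : ∀ τ ∈ Icc a b, HasDerivAt (f ∘ γ) (fderiv ℝ f (γ τ) (v τ)) τ := fun τ hτ =>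
    ((hf.differentiable one_ne_zero) (γ τ)).hasFDerivAt.comp_hasDerivAt τ (hγ τ hτ)
  have hγc : ContinuousOn γ (Icc a b) := fun τ hτ => (hγ τ hτ).continuousAt.continuousWithinAt
  rw [← intervalIntegral.integral_const_mul]
  refine norm_sub_le_integral_of_norm_deriv_le_of_le (f := f ∘ γ) hab
    (fun τ hτ => (hfγ τ hτ).continuousAt.continuousWithinAt)
    (fun τ hτ => (hfγ τ (Ioo_subset_Icc_self hτ)).differentiableAt.differentiableWithinAt)
    (ae_of_all _ fun τ hτ => ?_) ?_
  · rw [(hfγ τ (Ioo_subset_Icc_self hτ)).deriv, mul_comm]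
    exact (fderiv ℝ f (γ τ)).le_of_opNorm_le_of_le le_rfl (hv τ (Ioo_subset_Icc_self hτ))
  · refine ContinuousOn.intervalIntegrable ?_
    rw [uIcc_of_le hab]
    exact continuousOn_const.mul ((hf.continuous_fderiv one_ne_zero).comp_continuousOn hγc).norm

theorem sq_lintegral_le_measure_univ_mul_lintegral_sq {α : Type*} [MeasurableSpace α]
    (μ : Measure α) {g : α → ℝ≥0∞} (hg : AEMeasurable g μ) :
    (∫⁻ a, g a ∂μ) ^ 2 ≤ μ univ * ∫⁻ a, g a ^ 2 ∂μ := by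
  have hsqrt : ∀ a, (g a ^ 2) ^ (1 / 2 : ℝ) = g a := fun a => by
    rw [← ENNReal.rpow_natCast, ← ENNReal.rpow_mul]; norm_num
  have holder := ENNReal.lintegral_mul_norm_pow_le (hg.pow_const 2)
    (aemeasurable_const (b := (1 : ℝ≥0∞))) (p := 1 / 2) (q := 1 / 2)
    (by norm_num) (by norm_num) (by norm_num)
  simp only [hsqrt, ENNReal.one_rpow, mul_one, lintegral_const, one_mul] at holder
  calc (∫⁻ a, g a ∂μ) ^ 2
      ≤ ((∫⁻ a, g a ^ 2 ∂μ) ^ (1 / 2 : ℝ) * μ univ ^ (1 / 2 : ℝ)) ^ 2 := by gcongr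
    _ = μ univ * ∫⁻ a, g a ^ 2 ∂μ := by
      rw [mul_pow, ← ENNReal.rpow_natCast, ← ENNReal.rpow_natCast (μ univ ^ _),
        ← ENNReal.rpow_mul, ← ENNReal.rpow_mul]
      norm_num [mul_comm]

theorem ofReal_sq_comp_sub_le_mul_lintegral {E : Type*} [NormedAddCommGroup E]
    [NormedSpace ℝ E] {f : E → ℝ} (hf : ContDiff ℝ 1 f) {γ v : ℝ → E} {a b U : ℝ}
    (hab : a ≤ b) (hγ : ∀ τ ∈ Icc a b, HasDerivAt γ (v τ) τ) (hv : ∀ τ ∈ Icc a b, ‖v τ‖ ≤ U) :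
    ENNReal.ofReal ((f (γ b) - f (γ a)) ^ 2) ≤
      ENNReal.ofReal ((b - a) * U ^ 2) *
        ∫⁻ τ in Ioc a b, ENNReal.ofReal (‖fderiv ℝ f (γ τ)‖ ^ 2) := by
  set φ : ℝ → ℝ := fun τ => ‖fderiv ℝ f (γ τ)‖
  have hU : 0 ≤ U := (norm_nonneg _).trans (hv a ⟨le_rfl, hab⟩)
  have hφ : ContinuousOn φ (Icc a b) := fun τ hτ =>
    ((hf.continuous_fderiv one_ne_zero).continuousAt.comp
      (hγ τ hτ).continuousAt).norm.continuousWithinAt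
  have hφ_lintegral :
      ENNReal.ofReal (∫ τ in a..b, φ τ) = ∫⁻ τ in Ioc a b, ENNReal.ofReal (φ τ) := by
    rw [intervalIntegral.integral_of_le hab]
    exact ofReal_integral_eq_lintegral_ofReal
      ((hφ.integrableOn_compact isCompact_Icc).mono_set Ioc_subset_Icc_self)
      (ae_of_all _ fun _ => norm_nonneg _)
  calc ENNReal.ofReal ((f (γ b) - f (γ a)) ^ 2)
      ≤ ENNReal.ofReal (U * ∫ τ in a..b, φ τ) ^ 2 := by
        rw [← ENNReal.ofReal_pow (mul_nonneg hU
          (intervalIntegral.integral_nonneg hab fun _ _ => norm_nonneg _)), ← sq_abs]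
        gcongr
        exact abs_comp_sub_le_mul_integral_norm_fderiv hf hab hγ hv
    _ = ENNReal.ofReal (U ^ 2) * (∫⁻ τ in Ioc a b, ENNReal.ofReal (φ τ)) ^ 2 := by
        rw [ENNReal.ofReal_mul hU, mul_pow, hφ_lintegral, ENNReal.ofReal_pow hU]
    _ ≤ ENNReal.ofReal (U ^ 2) *
          (volume (Ioc a b) * ∫⁻ τ in Ioc a b, ENNReal.ofReal (φ τ) ^ 2) := by
        gcongr
        simpa using sq_lintegral_le_measure_univ_mul_lintegral_sq (volume.restrict (Ioc a b))
          ((hφ.mono Ioc_subset_Icc_self).aemeasurable measurableSet_Ioc).ennreal_ofReal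
    _ = _ := by
        rw [Real.volume_Ioc, ← mul_assoc, ← ENNReal.ofReal_mul (sq_nonneg U), mul_comm (U ^ 2)]
        simp only [φ, ENNReal.ofReal_pow (norm_nonneg _)]

theorem lintegral_lintegral_comp_eq_measure_mul {α T : Type*} [MeasurableSpace α]
    [MeasurableSpace T] {μ : Measure α} {ν : Measure T} [SFinite μ] [SFinite ν]
    {X : α → T → α} (hX : Measurable (Function.uncurry X)) {s : Set T} (hs : MeasurableSet s)
    (hXs : ∀ τ ∈ s, MeasurePreserving (fun x => X x τ) μ μ) {G : α → ℝ≥0∞}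
    (hG : Measurable G) :
    ∫⁻ x, ∫⁻ τ in s, G (X x τ) ∂ν ∂μ = ν s * ∫⁻ y, G y ∂μ := by
  rw [lintegral_lintegral_swap (f := fun x τ => G (X x τ)) (hG.comp hX).aemeasurable,
    setLIntegral_congr_fun hs fun τ hτ => (hXs τ hτ).lintegral_comp hG, setLIntegral_const,
    mul_comm]

theorem lintegral_ofReal_sq_comp_flow_sub_le {E : Type*} [NormedAddCommGroup E]
    [NormedSpace ℝ E] [MeasurableSpace E] [OpensMeasurableSpace E] {μ : Measure E} [SFinite μ]
    {f : E → ℝ} (hf : ContDiff ℝ 1 f) {X V : E → ℝ → E} {t0 t1 U : ℝ} (ht : t0 ≤ t1)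
    (hX : Measurable (Function.uncurry X)) (hX1 : ∀ x, X x t1 = x)
    (hX2 : ∀ x, ∀ τ ∈ Icc t0 t1, HasDerivAt (X x) (V x τ) τ)
    (hV : ∀ x, ∀ τ ∈ Icc t0 t1, ‖V x τ‖ ≤ U)
    (hX3 : ∀ τ ∈ Icc t0 t1, MeasurePreserving (fun x => X x τ) μ μ) :
    ∫⁻ x, ENNReal.ofReal ((f (X x t0) - f x) ^ 2) ∂μ ≤
      ENNReal.ofReal (((t1 - t0) * U) ^ 2) * ∫⁻ y, ENNReal.ofReal (‖fderiv ℝ f y‖ ^ 2) ∂μ := by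
  have hDf : Measurable fun y => ENNReal.ofReal (‖fderiv ℝ f y‖ ^ 2) :=
    ((hf.continuous_fderiv one_ne_zero).norm.pow 2).measurable.ennreal_ofReal
  calc ∫⁻ x, ENNReal.ofReal ((f (X x t0) - f x) ^ 2) ∂μ
      ≤ ∫⁻ x, ENNReal.ofReal ((t1 - t0) * U ^ 2) *
          (∫⁻ τ in Ioc t0 t1, ENNReal.ofReal (‖fderiv ℝ f (X x τ)‖ ^ 2)) ∂μ := by
        refine lintegral_mono fun x => ?_
        simpa only [hX1, sub_sq_comm (f x)] using
          ofReal_sq_comp_sub_le_mul_lintegral hf ht (hX2 x) (hV x)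
    _ = ENNReal.ofReal ((t1 - t0) * U ^ 2 * (t1 - t0)) *
          ∫⁻ y, ENNReal.ofReal (‖fderiv ℝ f y‖ ^ 2) ∂μ := by
        rw [lintegral_const_mul' _ _ ENNReal.ofReal_ne_top,
          lintegral_lintegral_comp_eq_measure_mul hX measurableSet_Ioc
            (fun τ hτ => hX3 τ (Ioc_subset_Icc_self hτ)) hDf,
          Real.volume_Ioc, ← mul_assoc, ← ENNReal.ofReal_mul (by positivity)]
    _ = _ := by congr 2; ring

theorem integral_le_mul_integral_of_lintegral_le {α : Type*} [MeasurableSpace α]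
    {μ : Measure α} {F G : α → ℝ} {c : ℝ} (hF : AEStronglyMeasurable F μ) (hF0 : 0 ≤ F)
    (hG : Integrable G μ) (hG0 : 0 ≤ G) (hc : 0 ≤ c)
    (h : ∫⁻ x, ENNReal.ofReal (F x) ∂μ ≤ ENNReal.ofReal c * ∫⁻ x, ENNReal.ofReal (G x) ∂μ) :
    ∫ x, F x ∂μ ≤ c * ∫ x, G x ∂μ := by
  rw [integral_eq_lintegral_of_nonneg_ae (ae_of_all _ hF0) hF]
  refine ENNReal.toReal_le_of_le_ofReal (mul_nonneg hc (integral_nonneg hG0)) ?_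
  rwa [ENNReal.ofReal_mul hc, ofReal_integral_eq_lintegral_ofReal hG (ae_of_all _ hG0)]

theorem transport_L2_estimate_general (d : ℕ) (U : ℝ)
    (t0 t1 : ℝ) (ht : t0 < t1)
    (u : EuclideanSpace ℝ (Fin d) → ℝ → EuclideanSpace ℝ (Fin d))
    (hub : ∀ x t, ‖u x t‖ ≤ U)
    (f : EuclideanSpace ℝ (Fin d) → ℝ)
    (hf : ContDiff ℝ 1 f) (hfc : HasCompactSupport f)
    (X : EuclideanSpace ℝ (Fin d) → ℝ → EuclideanSpace ℝ (Fin d))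
    (hXm : Measurable (fun p : EuclideanSpace ℝ (Fin d) × ℝ => X p.1 p.2))
    (hX1 : ∀ x, X x t1 = x)
    (hX2 : ∀ x, ∀ τ ∈ Icc t0 t1, HasDerivAt (X x) (u (X x τ) τ) τ)
    (hX3 : ∀ τ ∈ Icc t0 t1, MeasurePreserving (fun x => X x τ) volume volume) :
    Real.sqrt (∫ x, (f (X x t0) - f x) ^ 2) ≤
      (t1 - t0) * U * Real.sqrt (∫ x, ‖gradient f x‖ ^ 2) := by
  have hU : 0 ≤ U := (norm_nonneg _).trans (hub 0 t0)
  have hgrad : ∀ y, ‖gradient f y‖ = ‖fderiv ℝ f y‖ := fun y => LinearIsometryEquiv.norm_map _ _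
  have hX0 : Measurable fun x => X x t0 := hXm.comp (measurable_id.prodMk measurable_const)
  have hF : Measurable fun x => (f (X x t0) - f x) ^ 2 :=
    ((hf.continuous.measurable.comp hX0).sub hf.continuous.measurable).pow_const 2
  have hDf : Continuous fun y => ‖fderiv ℝ f y‖ ^ 2 :=
    (hf.continuous_fderiv one_ne_zero).norm.pow 2
  have hDf_sq : Integrable fun y => ‖fderiv ℝ f y‖ ^ 2 :=
    hDf.integrable_of_hasCompactSupport
      ((hfc.fderiv ℝ).norm.comp_left (g := fun r : ℝ => r ^ 2) (zero_pow two_ne_zero))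
  have hL2 := integral_le_mul_integral_of_lintegral_le hF.aestronglyMeasurable
    (fun x => sq_nonneg _) hDf_sq (fun y => sq_nonneg _) (sq_nonneg _)
    (lintegral_ofReal_sq_comp_flow_sub_le hf ht.le hXm hX1 hX2 (fun x τ _ => hub _ τ) hX3)
  calc Real.sqrt (∫ x, (f (X x t0) - f x) ^ 2)
      ≤ Real.sqrt (((t1 - t0) * U) ^ 2 * ∫ y, ‖fderiv ℝ f y‖ ^ 2) := Real.sqrt_le_sqrt hL2
    _ = (t1 - t0) * U * Real.sqrt (∫ x, ‖gradient f x‖ ^ 2) := by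
      rw [Real.sqrt_mul (sq_nonneg _), Real.sqrt_sq (mul_nonneg (sub_nonneg.2 ht.le) hU)]
      simp only [hgrad]

/-- **Transport estimate along the characteristics.**
If `‖u‖ ≤ U`, `f` is `C¹` with compact support, and `X(·,τ)` is the (measure-preserving)
characteristic flow with `X(x,t₁) = x` and `∂X/∂τ = u(X,τ)` on `[t₀,t₁]`, then
`‖f ∘ X(·,t₀) − f‖_{L²} ≤ (t₁−t₀)·U·‖∇f‖_{L²}`. -/
theorem transport_L2_estimate (d : ℕ) (hd : 1 ≤ d) (U : ℝ) (hU : 0 ≤ U)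
    (t0 t1 : ℝ) (ht : t0 < t1)
    (u : EuclideanSpace ℝ (Fin d) → ℝ → EuclideanSpace ℝ (Fin d))
    (hum : Measurable (fun p : EuclideanSpace ℝ (Fin d) × ℝ => u p.1 p.2))
    (hub : ∀ x t, ‖u x t‖ ≤ U)
    (f : EuclideanSpace ℝ (Fin d) → ℝ)
    (hf : ContDiff ℝ 1 f) (hfc : HasCompactSupport f)
    (X : EuclideanSpace ℝ (Fin d) → ℝ → EuclideanSpace ℝ (Fin d))
    (hXm : Measurable (fun p : EuclideanSpace ℝ (Fin d) × ℝ => X p.1 p.2))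
    (hX1 : ∀ x, X x t1 = x)
    (hX2 : ∀ x, ∀ τ ∈ Icc t0 t1, HasDerivAt (X x) (u (X x τ) τ) τ)
    (hX3 : ∀ τ ∈ Icc t0 t1, MeasurePreserving (fun x => X x τ) volume volume) :
    Real.sqrt (∫ x, (f (X x t0) - f x) ^ 2) ≤
      (t1 - t0) * U * Real.sqrt (∫ x, ‖gradient f x‖ ^ 2) :=
  transport_L2_estimate_general d U t0 t1 ht u hub f hf hfc X hXm hX1 hX2 hX3
end

section
/- Let H be a real Hilbert space, V ⊆ H a closed subspace, and P : H → H the orthogonal projection onto V. Let N ≥ 1 and let e₀, e₁, …, e_N ∈ H and f₀, …, f_{N−1} ∈ H satisfy, for every 1 ≤ n ≤ N: ⟨eₙ − fₙ₋₁, v⟩ = 0 for all v ∈ V, and ‖fₙ₋₁‖ = ‖eₙ₋₁‖. Then ‖e_N‖² + (1/2)·Σ_{n=1}^{N} ‖eₙ − fₙ₋₁‖² ≤ ‖e₀‖² + 2·Σ_{n=1}^{N} ‖eₙ − P eₙ‖². -/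
/-!
Since `eₙ - fₙ₋₁ ⊥ V` and `‖fₙ₋₁‖ = ‖eₙ₋₁‖`, the identity `2⟪a - b, a⟫ = ‖a‖² + ‖a - b‖² - ‖b‖²`
gives `‖eₙ‖² - ‖eₙ₋₁‖² + ‖eₙ - fₙ₋₁‖² = 2⟪eₙ - fₙ₋₁, eₙ - P eₙ⟫`, which Cauchy–Schwarz and Young
bound by `½‖eₙ - fₙ₋₁‖² + 2‖eₙ - P eₙ‖²`. Summing over `n` telescopes the left-hand side.
-/

open RealInnerProductSpace Finset

theorem Finset.sum_Icc_one_sub_pred {G : Type*} [AddCommGroup G] (g : ℕ → G) (N : ℕ) :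
    ∑ n ∈ Icc 1 N, (g n - g (n - 1)) = g N - g 0 := by
  induction N with
  | zero => simp
  | succ k ih =>
    rw [sum_Icc_succ_top (by omega), ih, Nat.add_sub_cancel]
    abel

section OneStep

variable {H : Type*} [NormedAddCommGroup H] [InnerProductSpace ℝ H]

theorem two_mul_inner_sub_self_eq (a b : H) :
    2 * ⟪a - b, a⟫ = ‖a‖ ^ 2 + ‖a - b‖ ^ 2 - ‖b‖ ^ 2 := by
  rw [norm_sub_sq_real, inner_sub_left, real_inner_self_eq_norm_sq, real_inner_comm]
  ring

theorem inner_sub_self_le_of_sub_mem_orthogonal (V : Submodule ℝ H) [V.HasOrthogonalProjection]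
    {a b : H} (hab : a - b ∈ Vᗮ) :
    ⟪a - b, a⟫ ≤ ‖a - b‖ * ‖a - (V.orthogonalProjectionOnto a : H)‖ := by
  have hperp : ⟪a - b, (V.orthogonalProjectionOnto a : H)⟫ = 0 :=
    (Submodule.mem_orthogonal' V _).1 hab _ (V.orthogonalProjectionOnto a).2
  calc ⟪a - b, a⟫ = ⟪a - b, a - (V.orthogonalProjectionOnto a : H)⟫ := by
        rw [inner_sub_right, hperp, sub_zero]
    _ ≤ _ := real_inner_le_norm _ _

theorem sq_norm_sub_sq_norm_add_half_le_of_sub_mem_orthogonal (V : Submodule ℝ H)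
    [V.HasOrthogonalProjection] {a b : H} (hab : a - b ∈ Vᗮ) :
    ‖a‖ ^ 2 - ‖b‖ ^ 2 + 1 / 2 * ‖a - b‖ ^ 2 ≤
      2 * ‖a - (V.orthogonalProjectionOnto a : H)‖ ^ 2 := by
  have hid := two_mul_inner_sub_self_eq a b
  have hcs := inner_sub_self_le_of_sub_mem_orthogonal V hab
  -- Young: `2 x y ≤ x² / 2 + 2 y²`
  nlinarith [sq_nonneg (‖a - b‖ - 2 * ‖a - (V.orthogonalProjectionOnto a : H)‖)]

end OneStep

theorem lg_first_stage_error_inequality_general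
    {H : Type*} [NormedAddCommGroup H] [InnerProductSpace ℝ H]
    (V : Submodule ℝ H) [V.HasOrthogonalProjection]
    (N : ℕ) (e f : ℕ → H)
    (horth : ∀ n ∈ Finset.Icc 1 N, ∀ v ∈ V, ⟪e n - f (n - 1), v⟫ = 0)
    (hiso : ∀ n ∈ Finset.Icc 1 N, ‖f (n - 1)‖ = ‖e (n - 1)‖) :
    ‖e N‖ ^ 2 + (1 / 2) * ∑ n ∈ Finset.Icc 1 N, ‖e n - f (n - 1)‖ ^ 2 ≤
      ‖e 0‖ ^ 2 + 2 * ∑ n ∈ Finset.Icc 1 N, ‖e n - (V.orthogonalProjectionOnto (e n) : H)‖ ^ 2 := by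
  have hstep : ∀ n ∈ Icc 1 N,
      ‖e n‖ ^ 2 - ‖e (n - 1)‖ ^ 2 + 1 / 2 * ‖e n - f (n - 1)‖ ^ 2 ≤
        2 * ‖e n - (V.orthogonalProjectionOnto (e n) : H)‖ ^ 2 := fun n hn => by
    rw [← hiso n hn]
    exact sq_norm_sub_sq_norm_add_half_le_of_sub_mem_orthogonal V
      ((Submodule.mem_orthogonal' V _).2 (horth n hn))
  have hsum := sum_le_sum hstep
  rw [sum_add_distrib, sum_Icc_one_sub_pred (fun n => ‖e n‖ ^ 2), ← mul_sum, ← mul_sum] at hsum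
  linarith

/-- **First-stage error inequality for the conventional LG method.**
If `⟨eₙ − fₙ₋₁, v⟩ = 0` for all `v ∈ V` and `‖fₙ₋₁‖ = ‖eₙ₋₁‖` for `1 ≤ n ≤ N`, then
`‖e_N‖² + (1/2)Σ‖eₙ − fₙ₋₁‖² ≤ ‖e₀‖² + 2Σ‖eₙ − P eₙ‖²`. -/
theorem lg_first_stage_error_inequality
    {H : Type*} [NormedAddCommGroup H] [InnerProductSpace ℝ H] [CompleteSpace H]
    (V : Submodule ℝ H) (hV : IsClosed (V : Set H)) [V.HasOrthogonalProjection]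
    (N : ℕ) (hN : 1 ≤ N) (e f : ℕ → H)
    (horth : ∀ n ∈ Finset.Icc 1 N, ∀ v ∈ V, ⟪e n - f (n - 1), v⟫ = 0)
    (hiso : ∀ n ∈ Finset.Icc 1 N, ‖f (n - 1)‖ = ‖e (n - 1)‖) :
    ‖e N‖ ^ 2 + (1 / 2) * ∑ n ∈ Finset.Icc 1 N, ‖e n - f (n - 1)‖ ^ 2 ≤
      ‖e 0‖ ^ 2 + 2 * ∑ n ∈ Finset.Icc 1 N, ‖e n - (V.orthogonalProjectionOnto (e n) : H)‖ ^ 2 :=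
  lg_first_stage_error_inequality_general V N e f horth hiso
end

section
/- Let H be a real Hilbert space, V ⊆ H a closed subspace with orthogonal projection P, and T₁, …, T_N : H → H linear isometries. Let Δt ∈ (0,1], N ≥ 1, and set T := N·Δt. Let c₀, …, c_N ∈ H satisfy cₙ = Tₙ cₙ₋₁ for 1 ≤ n ≤ N, and let c_h⁰, …, c_h^N ∈ V satisfy c_hⁿ = P(Tₙ c_h^{n−1}) for 1 ≤ n ≤ N. Assume there are constants A, B ≥ 0 such that ‖cₙ − P cₙ‖ ≤ A for all 0 ≤ n ≤ N, and ‖Tₙ(cₙ₋₁ − P cₙ₋₁) − (cₙ₋₁ − P cₙ₋₁)‖ ≤ Δt·B for all 1 ≤ n ≤ N. Then there exists a constant C, depending only on T (and not on Δt, N, A, B, H, V), such that ‖c_N − c_h^N‖ ≤ C·( ‖c₀ − c_h⁰‖ + A + min(A/Δt^{1/2}, B) ). -/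
/-!
Write `P` for the projection onto `V`, `ηₙ = cₙ - P cₙ ∈ Vᗮ` and `eₙ = P cₙ - c_hⁿ ∈ V`, so that
`cₙ - c_hⁿ = ηₙ + eₙ` and `eₙ₊₁ = P Tₙ₊₁ (eₙ + ηₙ)`. Since `P ηₙ = 0`, one step adds at most
`‖Tₙ₊₁ ηₙ - ηₙ‖ ≤ Δt B` to `‖eₙ‖`; since `eₙ ⊥ ηₙ`, one step adds at most `‖ηₙ‖² ≤ A²` to `‖eₙ‖²`.
Summing over the `N = Tfin / Δt` steps bounds `‖e_N‖` both by `‖e₀‖ + Tfin B` and by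
`‖e₀‖ + √(Tfin / Δt) A`.
-/

universe u

lemma le_add_mul_of_forall_lt_succ_le {a : ℕ → ℝ} {d : ℝ} {N : ℕ}
    (h : ∀ n < N, a (n + 1) ≤ a n + d) : a N ≤ a 0 + N * d := by
  induction N with
  | zero => simp
  | succ N ih =>
    push_cast
    linarith [ih fun n hn => h n (by omega), h N N.lt_succ_self]

lemma le_add_of_sq_le_sq_add_sq {x a b : ℝ} (ha : 0 ≤ a) (hb : 0 ≤ b)
    (h : x ^ 2 ≤ a ^ 2 + b ^ 2) : x ≤ a + b :=
  (abs_le_of_sq_le_sq' (by nlinarith [mul_nonneg ha hb]) (add_nonneg ha hb)).2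

lemma min_mul_mul_le_max_mul_min {s t x y : ℝ} (hx : 0 ≤ x) (hy : 0 ≤ y) :
    min (s * x) (t * y) ≤ max s t * min x y := by
  rcases le_total x y with hxy | hxy
  · rw [min_eq_left hxy]
    exact (min_le_left _ _).trans (mul_le_mul_of_nonneg_right (le_max_left s t) hx)
  · rw [min_eq_right hxy]
    exact (min_le_right _ _).trans (mul_le_mul_of_nonneg_right (le_max_right s t) hy)

section OrthogonalProjection

variable {H : Type*} [NormedAddCommGroup H] [InnerProductSpace ℝ H]
  (K : Submodule ℝ H) [K.HasOrthogonalProjection] (L : H →ₗᵢ[ℝ] H) {x y : H}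
  {T : ℕ → H →ₗᵢ[ℝ] H} {c ch : ℕ → H} {N : ℕ}

lemma starProjection_map_sub_starProjection_map :
    K.starProjection (L x) - K.starProjection (L y) =
      K.starProjection (L (K.starProjection x - y + (x - K.starProjection x))) := by
  rw [← map_sub, ← map_sub]
  congr 2
  abel

lemma norm_starProjection_map_add_le {u η : H} (hη : η ∈ Kᗮ) :
    ‖K.starProjection (L (u + η))‖ ≤ ‖u‖ + ‖L η - η‖ := by
  have hsplit : K.starProjection (L (u + η)) =
      K.starProjection (L u) + K.starProjection (L η - η) := by
    rw [map_sub K.starProjection, K.starProjection_apply_eq_zero_iff.2 hη, sub_zero, map_add,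
      map_add]
  calc ‖K.starProjection (L (u + η))‖
      ≤ ‖K.starProjection (L u)‖ + ‖K.starProjection (L η - η)‖ := hsplit ▸ norm_add_le _ _
    _ ≤ ‖L u‖ + ‖L η - η‖ :=
        add_le_add (K.norm_starProjection_apply_le _) (K.norm_starProjection_apply_le _)
    _ = ‖u‖ + ‖L η - η‖ := by rw [L.norm_map]

lemma norm_sq_starProjection_map_add_le {u η : H} (hu : u ∈ K) (hη : η ∈ Kᗮ) :
    ‖K.starProjection (L (u + η))‖ ^ 2 ≤ ‖u‖ ^ 2 + ‖η‖ ^ 2 := by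
  calc ‖K.starProjection (L (u + η))‖ ^ 2 ≤ ‖L (u + η)‖ ^ 2 := by
        gcongr; exact K.norm_starProjection_apply_le _
    _ = ‖u‖ ^ 2 + ‖η‖ ^ 2 := by
        rw [L.norm_map, norm_add_sq_real, Submodule.inner_right_of_mem_orthogonal hu hη]
        ring

lemma lagrangeGalerkin_error_succ {n : ℕ} (hc : c (n + 1) = T (n + 1) (c n))
    (hch : ch (n + 1) = K.starProjection (T (n + 1) (ch n))) :
    K.starProjection (c (n + 1)) - ch (n + 1) = K.starProjection
      (T (n + 1) (K.starProjection (c n) - ch n + (c n - K.starProjection (c n)))) := by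
  rw [hc, hch]
  exact starProjection_map_sub_starProjection_map K _

lemma norm_lagrangeGalerkin_error_le {β : ℝ} (hc : ∀ n < N, c (n + 1) = T (n + 1) (c n))
    (hch : ∀ n < N, ch (n + 1) = K.starProjection (T (n + 1) (ch n)))
    (hβ : ∀ n < N,
      ‖T (n + 1) (c n - K.starProjection (c n)) - (c n - K.starProjection (c n))‖ ≤ β) :
    ‖K.starProjection (c N) - ch N‖ ≤ ‖K.starProjection (c 0) - ch 0‖ + N * β := by
  refine le_add_mul_of_forall_lt_succ_le (a := fun n => ‖K.starProjection (c n) - ch n‖)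
    fun n hn => ?_
  rw [lagrangeGalerkin_error_succ K (hc n hn) (hch n hn)]
  exact (norm_starProjection_map_add_le K _ (K.sub_starProjection_mem_orthogonal _)).trans
    (by gcongr; exact hβ n hn)

lemma norm_sq_lagrangeGalerkin_error_le {α : ℝ} (hch0 : ch 0 ∈ K)
    (hc : ∀ n < N, c (n + 1) = T (n + 1) (c n))
    (hch : ∀ n < N, ch (n + 1) = K.starProjection (T (n + 1) (ch n)))
    (hα : ∀ n < N, ‖c n - K.starProjection (c n)‖ ≤ α) :
    ‖K.starProjection (c N) - ch N‖ ^ 2 ≤ ‖K.starProjection (c 0) - ch 0‖ ^ 2 + N * α ^ 2 := by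
  have hch_mem : ∀ n < N, ch n ∈ K
    | 0, _ => hch0
    | n + 1, hn => hch n (by omega) ▸ K.starProjection_apply_mem _
  refine le_add_mul_of_forall_lt_succ_le (a := fun n => ‖K.starProjection (c n) - ch n‖ ^ 2)
    fun n hn => ?_
  rw [lagrangeGalerkin_error_succ K (hc n hn) (hch n hn)]
  exact (norm_sq_starProjection_map_add_le K _
    (K.sub_mem (K.starProjection_apply_mem _) (hch_mem n hn))
    (K.sub_starProjection_mem_orthogonal _)).trans (by gcongr; exact hα n hn)

end OrthogonalProjection

/-- **Abstract form of the new error estimate for the conventional LG method (Theorem 3.1).**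
There is a constant `C`, depending only on the final time `Tfin = N·Δt`, such that the
Lagrange–Galerkin error satisfies
`‖c_N − c_h^N‖ ≤ C (‖c₀ − c_h⁰‖ + A + min (A/√Δt) B)`. -/
theorem lg_abstract_error_estimate (Tfin : ℝ) :
    ∃ C : ℝ, ∀ (H : Type u) [NormedAddCommGroup H] [InnerProductSpace ℝ H] [CompleteSpace H]
      (V : Submodule ℝ H) (_hV : IsClosed (V : Set H)) [Submodule.HasOrthogonalProjection V]
      (T : ℕ → H →ₗᵢ[ℝ] H) (Δt : ℝ) (N : ℕ) (c ch : ℕ → H) (A B : ℝ),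
      0 < Δt → Δt ≤ 1 → 1 ≤ N → (N : ℝ) * Δt = Tfin →
      (∀ n ∈ Finset.Icc 1 N, c n = T n (c (n - 1))) →
      ch 0 ∈ V →
      (∀ n ∈ Finset.Icc 1 N, ch n = (Submodule.orthogonalProjectionOnto V (T n (ch (n - 1))) : H)) →
      0 ≤ A → 0 ≤ B →
      (∀ n ≤ N, ‖c n - (Submodule.orthogonalProjectionOnto V (c n) : H)‖ ≤ A) →
      (∀ n ∈ Finset.Icc 1 N,
        ‖T n (c (n - 1) - (Submodule.orthogonalProjectionOnto V (c (n - 1)) : H)) -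
            (c (n - 1) - (Submodule.orthogonalProjectionOnto V (c (n - 1)) : H))‖ ≤ Δt * B) →
      ‖c N - ch N‖ ≤ C * (‖c 0 - ch 0‖ + A + min (A / Real.sqrt Δt) B) := by
  refine ⟨1 + max (Real.sqrt Tfin) Tfin, ?_⟩
  intro H _ _ _ V _ _ T Δt N c ch A B hΔt _ _ hT hc hch0 hch hA0 hB0 hA hB
  simp only [Submodule.coe_orthogonalProjectionOnto_apply] at hch hA hB
  have hIcc : ∀ n < N, n + 1 ∈ Finset.Icc 1 N := fun n hn => Finset.mem_Icc.2 ⟨n.succ_pos, hn⟩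
  have hc' : ∀ n < N, c (n + 1) = T (n + 1) (c n) := fun n hn => hc _ (hIcc n hn)
  have hch' : ∀ n < N, ch (n + 1) = V.starProjection (T (n + 1) (ch n)) :=
    fun n hn => hch _ (hIcc n hn)
  set e := ‖V.starProjection (c N) - ch N‖
  set e₀ := ‖V.starProjection (c 0) - ch 0‖
  have he_B : e ≤ e₀ + Tfin * B := by
    rw [← hT, mul_assoc]
    exact norm_lagrangeGalerkin_error_le V hc' hch' fun n hn => hB _ (hIcc n hn)
  have he_A : e ≤ e₀ + √Tfin * (A / √Δt) := by
    have hsqrt : √Tfin * (A / √Δt) = √N * A := by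
      rw [← hT, Real.sqrt_mul N.cast_nonneg]
      field_simp [(Real.sqrt_pos.2 hΔt).ne']
    refine hsqrt ▸ le_add_of_sq_le_sq_add_sq (norm_nonneg _) (by positivity) ?_
    rw [mul_pow, Real.sq_sqrt N.cast_nonneg]
    exact norm_sq_lagrangeGalerkin_error_le V hch0 hc' hch' fun n hn => hA n hn.le
  have he₀ : e₀ ≤ ‖c 0 - ch 0‖ := by
    calc e₀ = ‖V.starProjection (c 0 - ch 0)‖ := by
          rw [map_sub, V.starProjection_eq_self_iff.2 hch0]
      _ ≤ ‖c 0 - ch 0‖ := V.norm_starProjection_apply_le _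
  have hM : 0 ≤ max √Tfin Tfin := (Real.sqrt_nonneg _).trans (le_max_left _ _)
  calc ‖c N - ch N‖ ≤ ‖c N - V.starProjection (c N)‖ + e := norm_sub_le_norm_sub_add_norm_sub _ _ _
    _ ≤ A + (‖c 0 - ch 0‖ + max √Tfin Tfin * min (A / √Δt) B) := by
      have := le_min he_A he_B
      rw [min_add_add_left] at this
      linarith [hA N le_rfl, min_mul_mul_le_max_mul_min (s := √Tfin) (t := Tfin)
        (div_nonneg hA0 (Real.sqrt_nonneg Δt)) hB0]
    _ ≤ (1 + max √Tfin Tfin) * (‖c 0 - ch 0‖ + A + min (A / √Δt) B) := by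
      have := mul_nonneg hM (add_nonneg (norm_nonneg (c 0 - ch 0)) hA0)
      have := le_min (div_nonneg hA0 (Real.sqrt_nonneg Δt)) hB0
      nlinarith
end

section
/- Let H be a real Hilbert space, V ⊆ H a closed subspace, T₁, …, T_N : H → H linear isometries, Δt > 0, and S : H × H → ℝ a bilinear form with S(w,w) ≥ 0 for all w ∈ H. Let c_h⁰ ∈ V and, for 1 ≤ n ≤ N, let c_hⁿ ∈ V satisfy ⟨c_hⁿ − Tₙ c_h^{n−1}, v⟩ + Δt·S(c_hⁿ, v) = 0 for all v ∈ V. Then ‖c_h^N‖² + Δt·Σ_{n=1}^{N} S(c_hⁿ, c_hⁿ) + Σ_{n=1}^{N} ‖c_hⁿ − Tₙ c_h^{n−1}‖² ≤ ‖c_h⁰‖². -/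
/-!
Testing the scheme at step `n` with `v = c_hⁿ` and using the identity
`2⟪u - w, u⟫ = ‖u‖² - ‖w‖² + ‖u - w‖²` with `w = Tₙ c_h^{n-1}`, `‖w‖ = ‖c_h^{n-1}‖`, gives
`‖c_hⁿ‖² + 2Δt S(c_hⁿ, c_hⁿ) + ‖c_hⁿ - Tₙ c_h^{n-1}‖² = ‖c_h^{n-1}‖²`.
Dropping one copy of the nonnegative term `Δt S(c_hⁿ, c_hⁿ)` and telescoping over `n` gives the bound.
-/

open RealInnerProductSpace Finset

theorem two_mul_real_inner_sub_self {H : Type*} [NormedAddCommGroup H] [InnerProductSpace ℝ H]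
    (u w : H) : 2 * ⟪u - w, u⟫ = ‖u‖ ^ 2 - ‖w‖ ^ 2 + ‖u - w‖ ^ 2 := by
  rw [norm_sub_sq_real, inner_sub_left, real_inner_self_eq_norm_sq, real_inner_comm]
  ring

theorem norm_sq_add_norm_sub_sq_le_of_inner_sub_self {H : Type*} [NormedAddCommGroup H]
    [InnerProductSpace ℝ H] {u w : H} {a : ℝ} (ha : 0 ≤ a) (h : ⟪u - w, u⟫ + a = 0) :
    ‖u‖ ^ 2 + a + ‖u - w‖ ^ 2 ≤ ‖w‖ ^ 2 := by
  linarith [two_mul_real_inner_sub_self u w]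

theorem add_sum_Icc_le_of_step_le {a b : ℕ → ℝ} {N : ℕ}
    (hstep : ∀ n ∈ Icc 1 N, a n + b n ≤ a (n - 1)) :
    a N + ∑ n ∈ Icc 1 N, b n ≤ a 0 := by
  induction N with
  | zero => simp
  | succ N ih =>
    have hprev := ih fun n hn => hstep n (Icc_subset_Icc_right N.le_succ hn)
    have hlast := hstep (N + 1) (by simp)
    rw [sum_Icc_succ_top (by omega)]
    simp only [Nat.add_sub_cancel] at hlast
    linarith

theorem lps_lg_stability_general
    {H : Type*} [NormedAddCommGroup H] [InnerProductSpace ℝ H]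
    (V : Submodule ℝ H)
    (N : ℕ) (T : ℕ → H →ₗᵢ[ℝ] H) (Δt : ℝ) (hΔt : 0 < Δt)
    (S : H →ₗ[ℝ] H →ₗ[ℝ] ℝ) (hS : ∀ w, 0 ≤ S w w)
    (ch : ℕ → H) (hchV : ∀ n ∈ Finset.Icc 1 N, ch n ∈ V)
    (hscheme : ∀ n ∈ Finset.Icc 1 N, ∀ v ∈ V,
      ⟪ch n - T n (ch (n - 1)), v⟫ + Δt * S (ch n) v = 0) :
    ‖ch N‖ ^ 2 + Δt * ∑ n ∈ Finset.Icc 1 N, S (ch n) (ch n) +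
        ∑ n ∈ Finset.Icc 1 N, ‖ch n - T n (ch (n - 1))‖ ^ 2 ≤ ‖ch 0‖ ^ 2 := by
  have hstep : ∀ n ∈ Icc 1 N, ‖ch n‖ ^ 2 +
      (Δt * S (ch n) (ch n) + ‖ch n - T n (ch (n - 1))‖ ^ 2) ≤ ‖ch (n - 1)‖ ^ 2 := by
    intro n hn
    have h := norm_sq_add_norm_sub_sq_le_of_inner_sub_self (mul_nonneg hΔt.le (hS (ch n)))
      (hscheme n hn (ch n) (hchV n hn))
    rw [(T n).norm_map] at h
    linarith
  have htotal := add_sum_Icc_le_of_step_le hstep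
  rw [sum_add_distrib, ← mul_sum] at htotal
  linarith

/-- **Stability of the LPS-LG method (Lemma 4.1).**
If `S` is a nonnegative bilinear form, the `Tₙ` are linear isometries, and
`⟨c_hⁿ − Tₙ c_h^{n−1}, v⟩ + Δt·S(c_hⁿ, v) = 0` for all `v ∈ V`, then
`‖c_h^N‖² + Δt·Σ S(c_hⁿ,c_hⁿ) + Σ‖c_hⁿ − Tₙ c_h^{n−1}‖² ≤ ‖c_h⁰‖²`. -/
theorem lps_lg_stability
    {H : Type*} [NormedAddCommGroup H] [InnerProductSpace ℝ H] [CompleteSpace H]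
    (V : Submodule ℝ H) (hV : IsClosed (V : Set H))
    (N : ℕ) (T : ℕ → H →ₗᵢ[ℝ] H) (Δt : ℝ) (hΔt : 0 < Δt)
    (S : H →ₗ[ℝ] H →ₗ[ℝ] ℝ) (hS : ∀ w, 0 ≤ S w w)
    (ch : ℕ → H) (hch0 : ch 0 ∈ V) (hchV : ∀ n ∈ Finset.Icc 1 N, ch n ∈ V)
    (hscheme : ∀ n ∈ Finset.Icc 1 N, ∀ v ∈ V,
      ⟪ch n - T n (ch (n - 1)), v⟫ + Δt * S (ch n) v = 0) :
    ‖ch N‖ ^ 2 + Δt * ∑ n ∈ Finset.Icc 1 N, S (ch n) (ch n) +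
        ∑ n ∈ Finset.Icc 1 N, ‖ch n - T n (ch (n - 1))‖ ^ 2 ≤ ‖ch 0‖ ^ 2 :=
  lps_lg_stability_general V N T Δt hΔt S hS ch hchV hscheme
end

section
/- Let H be a real Hilbert space, V ⊆ H a closed subspace with orthogonal projection P, Δt > 0, N ≥ 1, and let S : H × H → ℝ be a symmetric bilinear form with S(w,w) ≥ 0 for all w ∈ H. Let c₁, …, c_N ∈ H, e₀, …, e_N ∈ H, and f₀, …, f_{N−1} ∈ H satisfy, for each 1 ≤ n ≤ N: (i) ⟨eₙ − fₙ₋₁, v⟩ + Δt·S(eₙ, v) = Δt·S(cₙ, v) for all v ∈ V; and (ii) ‖fₙ₋₁‖ = ‖eₙ₋₁‖. Set ρₙ := eₙ − P eₙ. Then ‖e_N‖² + (1/2)·Σ_{n=1}^{N} ‖eₙ − fₙ₋₁‖² + Δt·Σ_{n=1}^{N} S(eₙ, eₙ) ≤ ‖e₀‖² + Σ_{n=1}^{N} ( 2‖ρₙ‖² + 3Δt·( S(cₙ,cₙ) + S(ρₙ,ρₙ) ) ). -/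
/-!
Test the error equation at step `n` with `θₙ = P eₙ = eₙ - ρₙ ∈ V`. The term `⟪eₙ - fₙ₋₁, eₙ⟫`
polarizes into `½(‖eₙ‖² - ‖fₙ₋₁‖² + ‖eₙ - fₙ₋₁‖²)`, and all remaining cross terms, both of the
inner product and of `S`, are absorbed by Young's inequality, which holds for any positive
semidefinite symmetric bilinear form. Since `‖fₙ₋₁‖ = ‖eₙ₋₁‖`, the resulting one-step energy
inequalities telescope when summed over `n`.
-/

open RealInnerProductSpace Finset

theorem add_sum_Icc_le_of_forall_sub_add_le {α : Type*} [AddCommGroup α] [PartialOrder α]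
    [IsOrderedAddMonoid α] {a x y : ℕ → α} {N : ℕ}
    (h : ∀ n ∈ Icc 1 N, a n - a (n - 1) + x n ≤ y n) :
    a N + ∑ n ∈ Icc 1 N, x n ≤ a 0 + ∑ n ∈ Icc 1 N, y n := by
  induction N with
  | zero => simp
  | succ N ih =>
    have hlast := h (N + 1) (by simp)
    have hprev := ih fun n hn => h n (Icc_subset_Icc_right N.le_succ hn)
    rw [sum_Icc_succ_top (by omega), sum_Icc_succ_top (by omega)]
    rw [Nat.add_sub_cancel] at hlast
    calc a (N + 1) + (∑ n ∈ Icc 1 N, x n + x (N + 1))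
        = (a N + ∑ n ∈ Icc 1 N, x n) + (a (N + 1) - a N + x (N + 1)) := by abel
      _ ≤ (a 0 + ∑ n ∈ Icc 1 N, y n) + y (N + 1) := add_le_add hprev hlast
      _ = a 0 + (∑ n ∈ Icc 1 N, y n + y (N + 1)) := by abel

section PosSemidefBilinear

variable {M : Type*} [AddCommGroup M] [Module ℝ M] {S : M →ₗ[ℝ] M →ₗ[ℝ] ℝ}

theorem two_mul_mul_apply_le_of_nonneg (hSsymm : ∀ w z, S w z = S z w)
    (hSpos : ∀ w, 0 ≤ S w w) (t : ℝ) (a b : M) :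
    2 * t * S a b ≤ t ^ 2 * S a a + S b b := by
  have h := hSpos (t • a - b)
  simp only [map_sub, map_smul, LinearMap.sub_apply, LinearMap.smul_apply, smul_eq_mul,
    hSsymm b a] at h
  linarith

theorem apply_le_add_quarter_of_nonneg (hSsymm : ∀ w z, S w z = S z w)
    (hSpos : ∀ w, 0 ≤ S w w) (a b : M) : S a b ≤ S a a + S b b / 4 := by
  linarith [two_mul_mul_apply_le_of_nonneg hSsymm hSpos 2 a b]

theorem neg_apply_le_half_add_of_nonneg (hSsymm : ∀ w z, S w z = S z w)
    (hSpos : ∀ w, 0 ≤ S w w) (a b : M) : -S a b ≤ (S a a + S b b) / 2 := by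
  linarith [two_mul_mul_apply_le_of_nonneg hSsymm hSpos (-1) a b]

end PosSemidefBilinear

section InnerProduct

variable {H : Type*} [NormedAddCommGroup H] [InnerProductSpace ℝ H]

theorem real_inner_le_norm_sq_add_quarter (x y : H) : ⟪x, y⟫ ≤ ‖x‖ ^ 2 + ‖y‖ ^ 2 / 4 := by
  simpa only [innerₗ_apply_apply, real_inner_self_eq_norm_sq] using
    apply_le_add_quarter_of_nonneg (S := innerₗ H) (fun _ _ => real_inner_comm _ _)
      (fun _ => real_inner_self_nonneg) x y

theorem two_mul_real_inner_sub_self_s10 (x y : H) :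
    2 * ⟪x - y, x⟫ = ‖x‖ ^ 2 - ‖y‖ ^ 2 + ‖x - y‖ ^ 2 := by
  rw [norm_sub_sq_real, inner_sub_left, real_inner_self_eq_norm_sq, real_inner_comm]
  ring

theorem norm_sq_sub_norm_sq_add_le_of_inner_add_apply_eq {Δt : ℝ} (hΔt : 0 ≤ Δt)
    {S : H →ₗ[ℝ] H →ₗ[ℝ] ℝ} (hSsymm : ∀ w z, S w z = S z w) (hSpos : ∀ w, 0 ≤ S w w)
    {c e f θ : H} (herr : ⟪e - f, θ⟫ + Δt * S e θ = Δt * S c θ) :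
    ‖e‖ ^ 2 - ‖f‖ ^ 2 + ‖e - f‖ ^ 2 / 2 + Δt * S e e ≤
      2 * ‖e - θ‖ ^ 2 + 3 * Δt * (S c c + S (e - θ) (e - θ)) := by
  rw [← sub_sub_cancel e θ] at herr
  set ρ := e - θ
  simp only [inner_sub_right, map_sub] at herr
  have hpolar := two_mul_real_inner_sub_self_s10 e f
  have hinner := real_inner_le_norm_sq_add_quarter ρ (e - f)
  have heρ := apply_le_add_quarter_of_nonneg hSsymm hSpos ρ e
  have hce := apply_le_add_quarter_of_nonneg hSsymm hSpos c e
  have hcρ := neg_apply_le_half_add_of_nonneg hSsymm hSpos c ρ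
  rw [real_inner_comm] at hinner
  rw [hSsymm ρ e] at heρ
  linarith [mul_le_mul_of_nonneg_left heρ hΔt, mul_le_mul_of_nonneg_left hce hΔt,
    mul_le_mul_of_nonneg_left hcρ hΔt]

end InnerProduct

theorem lps_lg_summed_error_inequality_general
    {H : Type*} [NormedAddCommGroup H] [InnerProductSpace ℝ H]
    (V : Submodule ℝ H) [V.HasOrthogonalProjection]
    (Δt : ℝ) (hΔt : 0 < Δt) (N : ℕ)
    (S : H →ₗ[ℝ] H →ₗ[ℝ] ℝ) (hSsymm : ∀ w z, S w z = S z w) (hSpos : ∀ w, 0 ≤ S w w)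
    (c e f : ℕ → H)
    (herr : ∀ n ∈ Finset.Icc 1 N, ∀ v ∈ V,
      ⟪e n - f (n - 1), v⟫ + Δt * S (e n) v = Δt * S (c n) v)
    (hiso : ∀ n ∈ Finset.Icc 1 N, ‖f (n - 1)‖ = ‖e (n - 1)‖) :
    ‖e N‖ ^ 2 + (1 / 2) * ∑ n ∈ Finset.Icc 1 N, ‖e n - f (n - 1)‖ ^ 2 +
        Δt * ∑ n ∈ Finset.Icc 1 N, S (e n) (e n) ≤
      ‖e 0‖ ^ 2 + ∑ n ∈ Finset.Icc 1 N,
        (2 * ‖e n - (V.orthogonalProjectionOnto (e n) : H)‖ ^ 2 +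
          3 * Δt * (S (c n) (c n) +
            S (e n - (V.orthogonalProjectionOnto (e n) : H))
              (e n - (V.orthogonalProjectionOnto (e n) : H)))) := by
  have hsum := add_sum_Icc_le_of_forall_sub_add_le (a := fun n => ‖e n‖ ^ 2)
    (x := fun n => ‖e n - f (n - 1)‖ ^ 2 / 2 + Δt * S (e n) (e n))
    (y := fun n => 2 * ‖e n - (V.orthogonalProjectionOnto (e n) : H)‖ ^ 2 +
      3 * Δt * (S (c n) (c n) + S (e n - (V.orthogonalProjectionOnto (e n) : H))
        (e n - (V.orthogonalProjectionOnto (e n) : H)))) fun n hn => by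
      have hstep := norm_sq_sub_norm_sq_add_le_of_inner_add_apply_eq hΔt.le hSsymm hSpos
        (herr n hn _ (V.orthogonalProjectionOnto (e n)).2)
      rw [hiso n hn] at hstep
      linarith
  rw [sum_add_distrib, ← sum_div, ← mul_sum] at hsum
  linarith

/-- **Summed error inequality for the LPS-LG method (proof of Theorem 4.1).**
With `ρₙ := eₙ − P eₙ`, if `⟨eₙ − fₙ₋₁, v⟩ + Δt·S(eₙ,v) = Δt·S(cₙ,v)` for all `v ∈ V` and
`‖fₙ₋₁‖ = ‖eₙ₋₁‖`, then
`‖e_N‖² + (1/2)Σ‖eₙ−fₙ₋₁‖² + Δt·Σ S(eₙ,eₙ) ≤ ‖e₀‖² + Σ(2‖ρₙ‖² + 3Δt(S(cₙ,cₙ)+S(ρₙ,ρₙ)))`. -/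
theorem lps_lg_summed_error_inequality
    {H : Type*} [NormedAddCommGroup H] [InnerProductSpace ℝ H] [CompleteSpace H]
    (V : Submodule ℝ H) (hV : IsClosed (V : Set H)) [V.HasOrthogonalProjection]
    (Δt : ℝ) (hΔt : 0 < Δt) (N : ℕ) (hN : 1 ≤ N)
    (S : H →ₗ[ℝ] H →ₗ[ℝ] ℝ) (hSsymm : ∀ w z, S w z = S z w) (hSpos : ∀ w, 0 ≤ S w w)
    (c e f : ℕ → H)
    (herr : ∀ n ∈ Finset.Icc 1 N, ∀ v ∈ V,
      ⟪e n - f (n - 1), v⟫ + Δt * S (e n) v = Δt * S (c n) v)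
    (hiso : ∀ n ∈ Finset.Icc 1 N, ‖f (n - 1)‖ = ‖e (n - 1)‖) :
    ‖e N‖ ^ 2 + (1 / 2) * ∑ n ∈ Finset.Icc 1 N, ‖e n - f (n - 1)‖ ^ 2 +
        Δt * ∑ n ∈ Finset.Icc 1 N, S (e n) (e n) ≤
      ‖e 0‖ ^ 2 + ∑ n ∈ Finset.Icc 1 N,
        (2 * ‖e n - (V.orthogonalProjectionOnto (e n) : H)‖ ^ 2 +
          3 * Δt * (S (c n) (c n) +
            S (e n - (V.orthogonalProjectionOnto (e n) : H))
              (e n - (V.orthogonalProjectionOnto (e n) : H)))) :=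
  lps_lg_summed_error_inequality_general V Δt hΔt N S hSsymm hSpos c e f herr hiso
end

section
/- Let H be a real Hilbert space, V ⊆ H a closed subspace, Δt > 0, and B : H × H → ℝ a symmetric bilinear form with B(w,w) ≥ 0 for all w ∈ H. Let e, g, f, ρ, c ∈ H satisfy: (i) ⟨e − f, v⟩ + Δt·B(e, v) = Δt·B(c, v) for all v ∈ V; (ii) ‖f‖ = ‖g‖; and (iii) e − ρ ∈ V. Then ‖e‖² + (3/4)‖e − f‖² − ‖g‖² + Δt·B(e,e) ≤ 4‖ρ‖² + 3Δt·B(c,c) + 3Δt·B(ρ,ρ). -/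
/-!
Testing the error equation with `θ = e - ρ ∈ V` and using `2⟪e - f, e⟫ = ‖e‖² + ‖e - f‖² - ‖f‖²`
turns the left-hand side into `2⟪e - f, ρ⟫ + 2 Δt B(c - e, e - ρ)`. Both terms are bounded by
Young's inequality, once for the inner product and three times for the nonnegative symmetric form
`B`; the weights are chosen so that the `‖e - f‖²` and `B(e,e)` contributions are absorbed
into the left-hand side.
-/

open RealInnerProductSpace

namespace LinearMap

variable {M : Type*} [AddCommGroup M] [Module ℝ M] {B : M →ₗ[ℝ] M →ₗ[ℝ] ℝ}

theorem two_mul_mul_apply_le_of_nonneg (hsymm : ∀ x y, B x y = B y x) (hpos : ∀ x, 0 ≤ B x x)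
    (a : ℝ) (x y : M) : 2 * a * B x y ≤ a ^ 2 * B x x + B y y := by
  have h := hpos (a • x - y)
  simp only [map_sub, map_smul, sub_apply, smul_apply, smul_eq_mul, hsymm y x] at h
  linarith

theorem two_mul_apply_sub_sub_le (hsymm : ∀ x y, B x y = B y x) (hpos : ∀ x, 0 ≤ B x x)
    (c e ρ : M) : 2 * B (c - e) (e - ρ) ≤ 3 * B c c + 3 * B ρ ρ - B e e := by
  have hce := two_mul_mul_apply_le_of_nonneg hsymm hpos 2 c e
  have hcρ := two_mul_mul_apply_le_of_nonneg hsymm hpos (-1) c ρ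
  have hρe := two_mul_mul_apply_le_of_nonneg hsymm hpos 2 ρ e
  simp only [map_sub, sub_apply, hsymm ρ e] at hce hcρ hρe ⊢
  linarith

end LinearMap

section InnerProductSpace

variable {F : Type*} [NormedAddCommGroup F] [InnerProductSpace ℝ F]

theorem two_mul_inner_sub_self (a b : F) : 2 * ⟪a - b, a⟫ = ‖a‖ ^ 2 + ‖a - b‖ ^ 2 - ‖b‖ ^ 2 := by
  rw [norm_sub_sq_real, inner_sub_left, real_inner_self_eq_norm_sq, real_inner_comm]
  ring

theorem two_mul_inner_le_quarter_norm_sq_add (x y : F) :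
    2 * ⟪x, y⟫ ≤ (1 / 4) * ‖x‖ ^ 2 + 4 * ‖y‖ ^ 2 := by
  have h := LinearMap.two_mul_mul_apply_le_of_nonneg (B := innerₗ F)
    (fun x y ↦ real_inner_comm y x) (fun _ ↦ real_inner_self_nonneg) 4 y x
  simp only [innerₗ_apply_apply, real_inner_self_eq_norm_sq, real_inner_comm x y] at h
  linarith

end InnerProductSpace

theorem dc_lg_per_step_inequality_general
    {H : Type*} [NormedAddCommGroup H] [InnerProductSpace ℝ H]
    (V : Submodule ℝ H)
    (Δt : ℝ) (hΔt : 0 < Δt)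
    (B : H →ₗ[ℝ] H →ₗ[ℝ] ℝ) (hBsymm : ∀ w z, B w z = B z w) (hBpos : ∀ w, 0 ≤ B w w)
    (e g f ρ c : H)
    (herr : ∀ v ∈ V, ⟪e - f, v⟫ + Δt * B e v = Δt * B c v)
    (hiso : ‖f‖ = ‖g‖) (hθ : e - ρ ∈ V) :
    ‖e‖ ^ 2 + (3 / 4) * ‖e - f‖ ^ 2 - ‖g‖ ^ 2 + Δt * B e e ≤
      4 * ‖ρ‖ ^ 2 + 3 * Δt * B c c + 3 * Δt * B ρ ρ := by
  have htest : ⟪e - f, e - ρ⟫ = Δt * B (c - e) (e - ρ) := by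
    have h := herr (e - ρ) hθ
    simp only [map_sub, LinearMap.sub_apply] at h ⊢
    linarith
  have hsplit : ⟪e - f, e⟫ = ⟪e - f, ρ⟫ + ⟪e - f, e - ρ⟫ := by
    rw [inner_sub_right]
    ring
  have hB := mul_le_mul_of_nonneg_left (LinearMap.two_mul_apply_sub_sub_le hBsymm hBpos c e ρ)
    hΔt.le
  have hρ := two_mul_inner_le_quarter_norm_sq_add (e - f) ρ
  rw [← hiso]
  linarith [two_mul_inner_sub_self e f]

/-- **Per-step inequality (5.8) for the discontinuity-capturing LG method.**
If `B` is a nonnegative symmetric bilinear form, `⟨e − f, v⟩ + Δt·B(e,v) = Δt·B(c,v)`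
for all `v ∈ V`, `‖f‖ = ‖g‖`, and `e − ρ ∈ V`, then
`‖e‖² + (3/4)‖e−f‖² − ‖g‖² + Δt·B(e,e) ≤ 4‖ρ‖² + 3Δt·B(c,c) + 3Δt·B(ρ,ρ)`. -/
theorem dc_lg_per_step_inequality
    {H : Type*} [NormedAddCommGroup H] [InnerProductSpace ℝ H] [CompleteSpace H]
    (V : Submodule ℝ H) (hV : IsClosed (V : Set H))
    (Δt : ℝ) (hΔt : 0 < Δt)
    (B : H →ₗ[ℝ] H →ₗ[ℝ] ℝ) (hBsymm : ∀ w z, B w z = B z w) (hBpos : ∀ w, 0 ≤ B w w)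
    (e g f ρ c : H)
    (herr : ∀ v ∈ V, ⟪e - f, v⟫ + Δt * B e v = Δt * B c v)
    (hiso : ‖f‖ = ‖g‖) (hθ : e - ρ ∈ V) :
    ‖e‖ ^ 2 + (3 / 4) * ‖e - f‖ ^ 2 - ‖g‖ ^ 2 + Δt * B e e ≤
      4 * ‖ρ‖ ^ 2 + 3 * Δt * B c c + 3 * Δt * B ρ ρ :=
  dc_lg_per_step_inequality_general V Δt hΔt B hBsymm hBpos e g f ρ c herr hiso hθ
end
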